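/- arXiv:2411.12410 — 3 statements merged into one kernel-verified Lean document; each statement's English description precedes it below -/
import Mathlib

section
/- Every weakly N-injective module is essentially N-tight. -/
/- Common definitions: essential submodules, (essential) embeddings, injective hulls,
   the four relative tightness notions, weak injectivity, uniformity, indecomposability,
   socle, and the global (finitely-generated-test) versions of the notions. -/

universe u v

section Defs

variable (R : Type*) [Ring R]

/-- A submodule `S` of `A` is essential if it intersects every nonzero submodule nontrivially. -/
def EssIn {A : Type*} [AddCommGroup A] [Module R A] (S : Submodule R A) : Prop :=
  ∀ T : Submodule R A, T ⊓ S = ⊥ → T = ⊥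

variable (M N E A B : Type*)
variable [AddCommGroup M] [Module R M] [AddCommGroup N] [Module R N]
variable [AddCommGroup E] [Module R E] [AddCommGroup A] [Module R A]
variable [AddCommGroup B] [Module R B]

/-- `A` embeds in `B`. -/
def Embeds : Prop := ∃ f : A →ₗ[R] B, Function.Injective f

/-- `A` embeds essentially in `B` (monomorphism with essential image). -/
def EssEmbeds : Prop := ∃ f : A →ₗ[R] B, Function.Injective f ∧ EssIn R (LinearMap.range f)

/-- `E` is an injective hull of `M`: `E` is injective and `M` embeds essentially in `E`. -/
def IsInjHull : Prop :=
  Module.Injective R E ∧ ∃ i : M →ₗ[R] E, Function.Injective i ∧ EssIn R (LinearMap.range i)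

/-- `M` is `N`-tight (w.r.t. the hull `E` of `M`). -/
def NTight : Prop := ∀ K : Submodule R N, Embeds R (N ⧸ K) E → Embeds R (N ⧸ K) M

/-- `M` is essentially `N`-tight. -/
def EssNTight : Prop := ∀ K : Submodule R N, EssEmbeds R (N ⧸ K) E → EssEmbeds R (N ⧸ K) M

/-- `M` is strongly `N`-tight. -/
def StrNTight : Prop := ∀ K : Submodule R N, EssEmbeds R (N ⧸ K) E → Embeds R (N ⧸ K) M

/-- `M` is roughly `N`-tight. -/
def RghNTight : Prop := ∀ K : Submodule R N, Embeds R (N ⧸ K) E → EssEmbeds R (N ⧸ K) M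

/-- `M` is weakly `N`-injective (w.r.t. the hull `E` of `M`). -/
def WeaklyNInj : Prop :=
  ∀ σ : N →ₗ[R] E, ∃ X : Submodule R E, LinearMap.range σ ≤ X ∧ Nonempty (X ≃ₗ[R] M)

/-- `A` is uniform: nonzero, and every nonzero submodule is essential. -/
def IsUniform : Prop := Nontrivial A ∧ ∀ S : Submodule R A, S ≠ ⊥ → EssIn R S

/-- `A` is indecomposable: nonzero and with no nontrivial direct summand. -/
def Indecomp : Prop := Nontrivial A ∧ ∀ S : Submodule R A, (∃ T, IsCompl S T) → S = ⊥ ∨ S = ⊤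

/-- The socle: sum of all simple submodules. -/
def Socle : Submodule R A := sSup {S : Submodule R A | IsSimpleModule R ↥S}

/-- `M` is tight: `N`-tight for every finitely generated `N`. -/
def Tight : Prop := ∀ (N' : Type v) [AddCommGroup N'] [Module R N'],
  Module.Finite R N' → NTight R M N' E

/-- `M` is essentially tight. -/
def EssTight : Prop := ∀ (N' : Type v) [AddCommGroup N'] [Module R N'],
  Module.Finite R N' → EssNTight R M N' E

/-- `M` is strongly tight. -/
def StrTight : Prop := ∀ (N' : Type v) [AddCommGroup N'] [Module R N'],
  Module.Finite R N' → StrNTight R M N' E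

/-- `M` is roughly tight. -/
def RghTight : Prop := ∀ (N' : Type v) [AddCommGroup N'] [Module R N'],
  Module.Finite R N' → RghNTight R M N' E

/-- `M` is weakly injective: weakly `N`-injective for every finitely generated `N`. -/
def WeaklyInj : Prop := ∀ (N' : Type v) [AddCommGroup N'] [Module R N'],
  Module.Finite R N' → WeaklyNInj R M N' E

end Defs

section Statements

variable {R : Type*} [Ring R]

/-- Every weakly N-injective module is essentially N-tight. -/
theorem weaklyInj_imp_essTight (M N E : Type*) [AddCommGroup M] [Module R M] [AddCommGroup N] [Module R N]
    [AddCommGroup E] [Module R E] (hE : IsInjHull R M E)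
    (h : WeaklyNInj R M N E) : EssNTight R M N E := by
  rintro K ⟨f, hfinj, hfess⟩
  obtain ⟨X, hX, ⟨e⟩⟩ := h (f.comp (Submodule.mkQ K))
  have hmem : ∀ x, f x ∈ X := by
    intro x
    obtain ⟨n, rfl⟩ := Submodule.mkQ_surjective K x
    exact hX ⟨n, rfl⟩
  set g0 : (N ⧸ K) →ₗ[R] X := f.codRestrict X hmem with hg0
  set g : (N ⧸ K) →ₗ[R] M := e.toLinearMap.comp g0 with hg
  refine ⟨g, ?_, ?_⟩
  · intro a b hab
    apply hfinj
    have := e.injective hab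
    have : ((g0 a : X) : E) = ((g0 b : X) : E) := by rw [this]
    simpa [hg0, LinearMap.codRestrict] using this
  · intro T hT
    -- pull back T to E
    set T' : Submodule R E := (T.map e.symm.toLinearMap).map X.subtype with hT'
    have hT'bot : T' = ⊥ := by
      apply hfess
      rw [eq_bot_iff]
      rintro x ⟨hx1, hx2⟩
      obtain ⟨y, hy, rfl⟩ := hx1
      obtain ⟨t, ht, rfl⟩ := hy
      obtain ⟨n, hn⟩ := hx2
      have hgy : g0 n = e.symm t := by
        apply Subtype.ext
        simpa [hg0, LinearMap.codRestrict] using hn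
      have : g n ∈ T ⊓ LinearMap.range g := by
        refine ⟨?_, ⟨n, rfl⟩⟩
        have : g n = t := by
          simp only [hg, LinearMap.comp_apply, hgy, LinearEquiv.coe_coe,
            LinearEquiv.apply_symm_apply]
        rw [this]; exact ht
      rw [hT] at this
      have hgn : g n = 0 := this
      have : g0 n = 0 := by
        apply e.injective
        simpa [hg] using hgn
      have : ((e.symm t : X) : E) = ((0 : X) : E) := by rw [← hgy, this]
      simpa using this
    have hmap : T.map e.symm.toLinearMap = ⊥ := by
      rw [eq_bot_iff]
      intro y hy
      have : (y : E) ∈ T' := ⟨y, hy, rfl⟩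
      rw [hT'bot] at this
      simp only [Submodule.mem_bot] at this ⊢
      exact Subtype.ext this
    have := Submodule.map_injective_of_injective e.symm.injective
      (by rw [hmap, Submodule.map_bot] : T.map e.symm.toLinearMap = Submodule.map e.symm.toLinearMap ⊥)
    exact this

end Statements
end

section
/- Let M be a uniform module. Then M is N-tight if and only if M is essentially N-tight. -/
/- Common definitions: essential submodules, (essential) embeddings, injective hulls,
   the four relative tightness notions, weak injectivity, uniformity, indecomposability,
   socle, and the global (finitely-generated-test) versions of the notions. -/

universe u v

section Statements

variable {R : Type*} [Ring R]

/-- For a uniform module M, N-tight and essentially N-tight coincide. -/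
theorem uniform_tight_iff_essTight (M N E : Type*) [AddCommGroup M] [Module R M] [AddCommGroup N] [Module R N]
    [AddCommGroup E] [Module R E] (hE : IsInjHull R M E)
    (hu : IsUniform R M) : NTight R M N E ↔ EssNTight R M N E := by
  obtain ⟨hEinj, i, hi, hiess⟩ := hE
  obtain ⟨hMnt, hMuni⟩ := hu
  -- E is uniform
  have hEuni : ∀ S : Submodule R E, S ≠ ⊥ → EssIn R S := by
    intro S hS T hTS
    have hcS : Submodule.comap i S ≠ ⊥ := by
      intro h
      apply hS
      apply hiess
      rw [inf_comm, ← Submodule.map_comap_eq, h, Submodule.map_bot]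
    have hcT : Submodule.comap i T ⊓ Submodule.comap i S = ⊥ := by
      rw [← Submodule.comap_inf, hTS, Submodule.comap_bot, LinearMap.ker_eq_bot.2 hi]
    have hT0 := hMuni _ hcS _ hcT
    apply hiess
    rw [inf_comm, ← Submodule.map_comap_eq, hT0, Submodule.map_bot]
  have hEnt : Nontrivial E := by
    obtain ⟨x, y, hxy⟩ := hMnt
    exact ⟨i x, i y, fun h => hxy (hi h)⟩
  constructor
  · intro ht K hK
    obtain ⟨f, hf, hfe⟩ := hK
    obtain ⟨g, hg⟩ := ht K ⟨f, hf⟩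
    refine ⟨g, hg, hMuni _ ?_⟩
    intro h
    rw [LinearMap.range_eq_bot] at h
    have hsub : Subsingleton (N ⧸ K) :=
      ⟨fun a b => hg (by rw [h]; simp)⟩
    have hf0 : LinearMap.range f = ⊥ := by
      rw [LinearMap.range_eq_bot]
      exact Subsingleton.elim _ _
    rw [hf0] at hfe
    have : (⊤ : Submodule R E) = ⊥ := hfe ⊤ (by simp)
    exact (bot_ne_top (α := Submodule R E)) this.symm
  · intro ht K hK
    obtain ⟨f, hf⟩ := hK
    by_cases hs : Subsingleton (N ⧸ K)
    · exact ⟨0, fun a b _ => Subsingleton.elim a b⟩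
    · have hne : LinearMap.range f ≠ ⊥ := by
        intro h
        rw [LinearMap.range_eq_bot] at h
        exact hs ⟨fun a b => hf (by rw [h]; simp)⟩
      obtain ⟨g, hg, _⟩ := ht K ⟨f, hf, hEuni _ hne⟩
      exact ⟨g, hg⟩

end Statements
end

section
/- If N is a uniform module and P and Q are strongly N-tight modules, then P ⊕ Q is strongly N-tight. -/
/- Common definitions: essential submodules, (essential) embeddings, injective hulls,
   the four relative tightness notions, weak injectivity, uniformity, indecomposability,
   socle, and the global (finitely-generated-test) versions of the notions. -/

universe u v

/-! If `f : N ⧸ K → EP × EQ` is an essential embedding, the ranges of its two coordinates are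
essential in `EP` and `EQ`, so the quotients of `N` by the kernels `K₁`, `K₂` of the coordinates
embed into `P` and `Q`; as `K = K₁ ⊓ K₂`, `N ⧸ K` embeds into `N ⧸ K₁ × N ⧸ K₂`. -/

section Products

open LinearMap

variable {R : Type*} [Ring R] {M N A B P Q : Type*}
variable [AddCommGroup M] [Module R M] [AddCommGroup N] [Module R N]
variable [AddCommGroup A] [Module R A] [AddCommGroup B] [Module R B]
variable [AddCommGroup P] [Module R P] [AddCommGroup Q] [Module R Q]

theorem EssIn.map_of_leftInverse {π : M →ₗ[R] A} {ι : A →ₗ[R] M}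
    (hπι : Function.LeftInverse π ι) {S : Submodule R M} (hS : EssIn R S) : EssIn R (S.map π) := by
  intro T hT
  have hιT : T.map ι ⊓ S = ⊥ := by
    rw [eq_bot_iff]
    rintro _ ⟨⟨t, ht, rfl⟩, hιt⟩
    have ht0 : t ∈ T ⊓ S.map π := ⟨ht, ι t, hιt, hπι t⟩
    rw [hT, Submodule.mem_bot] at ht0
    simp [ht0]
  exact Submodule.map_injective_of_injective hπι.injective (by rw [hS _ hιT, Submodule.map_bot])

theorem EssIn.map_fst {S : Submodule R (A × B)} (hS : EssIn R S) :
    EssIn R (S.map (fst R A B)) :=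
  hS.map_of_leftInverse (ι := inl R A B) fun _ => rfl

theorem EssIn.map_snd {S : Submodule R (A × B)} (hS : EssIn R S) :
    EssIn R (S.map (snd R A B)) :=
  hS.map_of_leftInverse (ι := inr R A B) fun _ => rfl

theorem essEmbeds_quotient_ker {g : N →ₗ[R] A} (hg : EssIn R (range g)) :
    EssEmbeds R (N ⧸ ker g) A :=
  ⟨(ker g).liftQ g le_rfl, ker_eq_bot.mp ((ker g).ker_liftQ_eq_bot _ _ le_rfl),
    by rwa [Submodule.range_liftQ]⟩

theorem embeds_quotient_ker_prod {g : N →ₗ[R] A × B}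
    (hP : Embeds R (N ⧸ ker (fst R A B ∘ₗ g)) P) (hQ : Embeds R (N ⧸ ker (snd R A B ∘ₗ g)) Q) :
    Embeds R (N ⧸ ker g) (P × Q) := by
  obtain ⟨p, hp⟩ := hP
  obtain ⟨q, hq⟩ := hQ
  set ψ := (p ∘ₗ (ker (fst R A B ∘ₗ g)).mkQ).prod (q ∘ₗ (ker (snd R A B ∘ₗ g)).mkQ)
  have hψ : ker g = ker ψ := by
    rw [ker_prod, ker_comp_of_ker_eq_bot _ (ker_eq_bot.mpr hp),
      ker_comp_of_ker_eq_bot _ (ker_eq_bot.mpr hq), Submodule.ker_mkQ, Submodule.ker_mkQ,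
      ← ker_prod, ← prod_comp, pair_fst_snd, id_comp]
  exact ⟨(ker g).liftQ ψ hψ.le, ker_eq_bot.mp ((ker g).ker_liftQ_eq_bot' ψ hψ)⟩

end Products

section Statements

variable {R : Type*} [Ring R]

theorem stronglyTight_prod_general (N P Q EP EQ : Type*)
    [AddCommGroup N] [Module R N] [AddCommGroup P] [Module R P]
    [AddCommGroup Q] [Module R Q] [AddCommGroup EP] [Module R EP]
    [AddCommGroup EQ] [Module R EQ]
    (hP : StrNTight R P N EP) (hQ : StrNTight R Q N EQ) :
    StrNTight R (P × Q) N (EP × EQ) := by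
  rintro K ⟨f, hf, hess⟩
  set g := f ∘ₗ K.mkQ
  have hker : LinearMap.ker g = K := by
    rw [LinearMap.ker_comp_of_ker_eq_bot _ (LinearMap.ker_eq_bot.mpr hf), Submodule.ker_mkQ]
  have hrange : EssIn R (LinearMap.range g) := by
    rwa [LinearMap.range_comp_of_range_eq_top _ K.range_mkQ]
  rw [← hker]
  refine embeds_quotient_ker_prod (hP _ (essEmbeds_quotient_ker ?_))
    (hQ _ (essEmbeds_quotient_ker ?_))
  · rw [LinearMap.range_comp]
    exact hrange.map_fst
  · rw [LinearMap.range_comp]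
    exact hrange.map_snd

/-- If N is uniform and P, Q are strongly N-tight, then so is P ⊕ Q. -/
theorem stronglyTight_prod (N P Q EP EQ : Type*)
    [AddCommGroup N] [Module R N] [AddCommGroup P] [Module R P]
    [AddCommGroup Q] [Module R Q] [AddCommGroup EP] [Module R EP]
    [AddCommGroup EQ] [Module R EQ]
    (hN : IsUniform R N) (hEP : IsInjHull R P EP) (hEQ : IsInjHull R Q EQ)
    (hP : StrNTight R P N EP) (hQ : StrNTight R Q N EQ) :
    StrNTight R (P × Q) N (EP × EQ) :=
  stronglyTight_prod_general N P Q EP EQ hP hQ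

end Statements
end
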